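/- Let G/K be a generalized flag manifold with isotropy decomposition 𝔪 = 𝔪₁ ⊕ ⋯ ⊕ 𝔪ₛ into pairwise inequivalent irreducible Ad(K)-submodules, and let K = S × K₁. If some irreducible Ad(K)-submodule 𝔪ᵢ (i ∈ {1, …, s}) is reducible as an Ad(K₁)-module, then 𝔪ᵢ decomposes as a direct sum 𝔪ᵢ = 𝔫₁ⁱ ⊕ 𝔫₂ⁱ of exactly two Ad(K₁)-invariant irreducible submodules, and 𝔫₁ⁱ and 𝔫₂ⁱ are equivalent as Ad(K₁)-modules. -/

import Mathlib

open Module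

/-- A submodule `W` of a Lie algebra is invariant under the (infinitesimal) adjoint action
of the Lie subalgebra `k`.  For a connected Lie group this corresponds to `Ad(K)`-invariance. -/
def AdInvariant {𝔤 : Type*} [LieRing 𝔤] [LieAlgebra ℝ 𝔤]
    (k : LieSubalgebra ℝ 𝔤) (W : Submodule ℝ 𝔤) : Prop :=
  ∀ x ∈ k, ∀ w ∈ W, ⁅x, w⁆ ∈ W

/-- `W` is a nonzero irreducible module for the adjoint action of `k`
(i.e. an irreducible `Ad(K)`-module). -/
def AdIrreducible {𝔤 : Type*} [LieRing 𝔤] [LieAlgebra ℝ 𝔤]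
    (k : LieSubalgebra ℝ 𝔤) (W : Submodule ℝ 𝔤) : Prop :=
  AdInvariant k W ∧ W ≠ ⊥ ∧
    ∀ U : Submodule ℝ 𝔤, U ≤ W → AdInvariant k U → U = ⊥ ∨ U = W

/-- `W` is a reducible `Ad(K)`-module: invariant, with a proper nonzero invariant submodule. -/
def AdReducible {𝔤 : Type*} [LieRing 𝔤] [LieAlgebra ℝ 𝔤]
    (k : LieSubalgebra ℝ 𝔤) (W : Submodule ℝ 𝔤) : Prop :=
  AdInvariant k W ∧ ∃ U : Submodule ℝ 𝔤, U ≤ W ∧ AdInvariant k U ∧ U ≠ ⊥ ∧ U ≠ W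

/-- Equivalence of two `Ad(K)`-modules `U` and `V`: an injective intertwining linear map
carrying `U` onto `V`. -/
def AdEquiv {𝔤 : Type*} [LieRing 𝔤] [LieAlgebra ℝ 𝔤]
    (k : LieSubalgebra ℝ 𝔤) (U V : Submodule ℝ 𝔤) : Prop :=
  ∃ f : 𝔤 →ₗ[ℝ] 𝔤, Submodule.map f U = V ∧ (∀ u ∈ U, f u = 0 → u = 0) ∧
    ∀ x ∈ k, ∀ u ∈ U, f ⁅x, u⁆ = ⁅x, f u⁆

/-- The g.o. property of the `G`-invariant metric with associated operator `Λ` on the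
homogeneous space with isotropy algebra `k` and tangent space `n`: every geodesic through
the origin is homogeneous, i.e. (by the standard criterion) for every `x ∈ n` there is
`a ∈ k` such that `⁅a + x, Λ x⁆ ∈ k`. -/
def IsGOMetric {𝔤 : Type*} [LieRing 𝔤] [LieAlgebra ℝ 𝔤]
    (k : LieSubalgebra ℝ 𝔤) (n : Submodule ℝ 𝔤) (Λ : 𝔤 →ₗ[ℝ] 𝔤) : Prop :=
  ∀ x ∈ n, ∃ a ∈ k, ⁅a + x, Λ x⁆ ∈ k.toSubmodule

/-!
The centre `𝔰` of `𝔨` acts on `𝔪ᵢ` by `𝔨`-intertwiners, and for `a, b ∈ 𝔰` the operator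
`ad a ∘ ad b` is self-adjoint for the positive definite form `B`; by Schur's lemma it is a scalar
on `𝔪ᵢ`. Hence some `s₀ ∈ 𝔰` acts on `𝔪ᵢ` as a complex structure up to scale, `D² = μ < 0`, and
every element of `𝔰` acts as a multiple of `D`. So `𝔪ᵢ` is irreducible under `𝔨₁` together with
`D`, and for a minimal `𝔨₁`-submodule `𝔫 ⊆ 𝔪ᵢ` we get `𝔪ᵢ = 𝔫 ⊕ D 𝔫`, with `D` itself the
equivalence `𝔫 ≅ D 𝔫`.
-/

theorem LinearMap.BilinForm.exists_hasEigenvalue_of_isAdjointPair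
    {E : Type*} [AddCommGroup E] [Module ℝ E] [FiniteDimensional ℝ E] [Nontrivial E]
    (B : LinearMap.BilinForm ℝ E) (hB : B.IsSymm) (hpos : ∀ x, x ≠ 0 → 0 < B x x)
    (S : Module.End ℝ E) (hS : B.IsAdjointPair B S S) :
    ∃ μ : ℝ, Module.End.HasEigenvalue S μ := by
  let core : InnerProductSpace.Core ℝ E :=
    { inner x y := B x y
      conj_inner_symm x y := hB.eq y x
      re_inner_nonneg x := by
        rcases eq_or_ne x 0 with rfl | hx
        · simp
        · exact (hpos x hx).le
      add_left x y z := by simp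
      smul_left x y r := by simp
      definite x hx := by
        by_contra h
        exact (hpos x h).ne' hx }
  let := core.toNormedAddCommGroup
  let := InnerProductSpace.ofCore core.toCore
  exact ⟨_, LinearMap.IsSymmetric.hasEigenvalue_iSup_of_finiteDimensional (T := S) hS⟩

section AdModules

variable {𝔤 : Type*} [LieRing 𝔤] [LieAlgebra ℝ 𝔤]

theorem AdInvariant.inf {k : LieSubalgebra ℝ 𝔤} {U V : Submodule ℝ 𝔤}
    (hU : AdInvariant k U) (hV : AdInvariant k V) : AdInvariant k (U ⊓ V) :=
  fun x hx _ hw => ⟨hU x hx _ hw.1, hV x hx _ hw.2⟩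

theorem AdInvariant.sup {k : LieSubalgebra ℝ 𝔤} {U V : Submodule ℝ 𝔤}
    (hU : AdInvariant k U) (hV : AdInvariant k V) : AdInvariant k (U ⊔ V) := by
  intro x hx w hw
  obtain ⟨u, hu, v, hv, rfl⟩ := Submodule.mem_sup.mp hw
  rw [lie_add]
  exact Submodule.add_mem_sup (hU x hx u hu) (hV x hx v hv)

theorem AdInvariant.of_le_sup {k a b : LieSubalgebra ℝ 𝔤} {U : Submodule ℝ 𝔤}
    (hk : k.toSubmodule ≤ a.toSubmodule ⊔ b.toSubmodule)
    (ha : AdInvariant a U) (hb : AdInvariant b U) : AdInvariant k U := by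
  intro x hx w hw
  obtain ⟨y, hy, z, hz, rfl⟩ := Submodule.mem_sup.mp (hk hx)
  rw [add_lie]
  exact U.add_mem (ha y hy w hw) (hb z hz w hw)

theorem AdInvariant.map {k : LieSubalgebra ℝ 𝔤} {U : Submodule ℝ 𝔤} (hU : AdInvariant k U)
    {D : 𝔤 →ₗ[ℝ] 𝔤} (hD : ∀ x ∈ k, ∀ u ∈ U, D ⁅x, u⁆ = ⁅x, D u⁆) :
    AdInvariant k (U.map D) := by
  rintro x hx _ ⟨u, hu, rfl⟩
  rw [← hD x hx u hu]
  exact Submodule.mem_map_of_mem (hU x hx u hu)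

theorem AdInvariant.exists_adIrreducible_le [IsArtinian ℝ 𝔤] {k : LieSubalgebra ℝ 𝔤}
    {U : Submodule ℝ 𝔤} (hU : AdInvariant k U) (hU₀ : U ≠ ⊥) :
    ∃ n ≤ U, AdIrreducible k n := by
  obtain ⟨n, ⟨hnU, hn, hn₀⟩, hmin⟩ := wellFounded_lt.has_min
    {n : Submodule ℝ 𝔤 | n ≤ U ∧ AdInvariant k n ∧ n ≠ ⊥} ⟨U, le_rfl, hU, hU₀⟩
  refine ⟨n, hnU, hn, hn₀, fun V hVn hV => or_iff_not_imp_left.mpr fun hV₀ => ?_⟩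
  by_contra hne
  exact hmin V ⟨hVn.trans hnU, hV, hV₀⟩ (lt_of_le_of_ne hVn hne)

/-- Schur's lemma for intertwiners that are self-adjoint for a positive definite form. -/
theorem AdIrreducible.exists_eq_smul_of_isAdjointPair [FiniteDimensional ℝ 𝔤]
    {k : LieSubalgebra ℝ 𝔤} {W : Submodule ℝ 𝔤} (hW : AdIrreducible k W)
    (B : LinearMap.BilinForm ℝ 𝔤) (hB : B.IsSymm) (hpos : ∀ x, x ≠ 0 → 0 < B x x)
    (S : Module.End ℝ 𝔤) (hSW : ∀ w ∈ W, S w ∈ W)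
    (hSk : ∀ x ∈ k, ∀ w ∈ W, S ⁅x, w⁆ = ⁅x, S w⁆)
    (hS : ∀ v ∈ W, ∀ w ∈ W, B (S v) w = B v (S w)) :
    ∃ μ : ℝ, ∀ w ∈ W, S w = μ • w := by
  obtain ⟨hWinv, hW₀, hWmin⟩ := hW
  have : Nontrivial W := Submodule.nontrivial_iff_ne_bot.mpr hW₀
  obtain ⟨μ, hμ⟩ := (B.restrict W).exists_hasEigenvalue_of_isAdjointPair
    ⟨fun v w => hB.eq v w⟩ (fun v hv => hpos v (by simpa using hv))
    (S.restrict hSW) (fun v w => hS v v.2 w w.2)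
  obtain ⟨v, hv⟩ := hμ.exists_hasEigenvector
  let V : Submodule ℝ 𝔤 := W ⊓ LinearMap.ker (S - μ • 1)
  have hVinv : AdInvariant k V := by
    rintro x hx w ⟨hwW, hw⟩
    have hSw : S w = μ • w := sub_eq_zero.mp hw
    refine ⟨hWinv x hx w hwW, ?_⟩
    simp [LinearMap.mem_ker, hSk x hx w hwW, hSw]
  have hV₀ : V ≠ ⊥ := by
    refine (Submodule.ne_bot_iff V).mpr ⟨v, ⟨v.2, ?_⟩, by simpa using hv.2⟩
    simpa [sub_eq_zero] using congrArg Subtype.val hv.apply_eq_smul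
  refine ⟨μ, fun w hw => ?_⟩
  have hwV : w ∈ V := ((hWmin V inf_le_left hVinv).resolve_left hV₀).ge hw
  simpa [sub_eq_zero] using hwV.2

end AdModules

theorem lie_lie_comm_of_lie_eq_zero {L M : Type*} [LieRing L] [AddCommGroup M] [LieRingModule L M]
    {x y : L} (h : ⁅x, y⁆ = 0) (m : M) : ⁅x, ⁅y, m⁆⁆ = ⁅y, ⁅x, m⁆⁆ := by
  rw [leibniz_lie, h, zero_lie, zero_add]

section CompactType

variable {𝔤 : Type*} [LieRing 𝔤] [LieAlgebra ℝ 𝔤] [FiniteDimensional ℝ 𝔤]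

/-- On an irreducible summand, the product of the adjoint actions of two central elements of
`k` is self-adjoint for `-killingForm` and commutes with `k`, hence is a scalar. -/
theorem AdIrreducible.exists_lie_lie_eq_smul
    (hcompact : ∀ x : 𝔤, x ≠ 0 → killingForm ℝ 𝔤 x x < 0)
    {k : LieSubalgebra ℝ 𝔤} {W : Submodule ℝ 𝔤} (hW : AdIrreducible k W) {a b : 𝔤}
    (ha : a ∈ k) (hb : b ∈ k) (ha' : ∀ x ∈ k, ⁅x, a⁆ = 0) (hb' : ∀ x ∈ k, ⁅x, b⁆ = 0) :
    ∃ c : ℝ, ∀ w ∈ W, ⁅a, ⁅b, w⁆⁆ = c • w := by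
  have hab : ∀ v : 𝔤, ⁅a, ⁅b, v⁆⁆ = ⁅b, ⁅a, v⁆⁆ := lie_lie_comm_of_lie_eq_zero (hb' a ha)
  refine hW.exists_eq_smul_of_isAdjointPair (-killingForm ℝ 𝔤)
    ⟨fun v w => by simp [LieModule.traceForm_comm ℝ 𝔤 𝔤 v w]⟩
    (fun v hv => by simpa using hcompact v hv)
    (LieAlgebra.ad ℝ 𝔤 a * LieAlgebra.ad ℝ 𝔤 b)
    (fun w hw => hW.1 a ha _ (hW.1 b hb w hw)) (fun x hx w _ => ?_) (fun v _ w _ => ?_)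
  · simp only [Module.End.mul_apply, LieAlgebra.ad_apply]
    rw [← lie_lie_comm_of_lie_eq_zero (hb' x hx), ← lie_lie_comm_of_lie_eq_zero (ha' x hx)]
  · simp only [Module.End.mul_apply, LieAlgebra.ad_apply, LinearMap.neg_apply]
    rw [LieModule.traceForm_apply_lie_apply', LieModule.traceForm_apply_lie_apply', hab, neg_neg]

theorem AdIrreducible.exists_neg_lie_lie_eq_smul
    (hcompact : ∀ x : 𝔤, x ≠ 0 → killingForm ℝ 𝔤 x x < 0)
    {k : LieSubalgebra ℝ 𝔤} {W : Submodule ℝ 𝔤} (hW : AdIrreducible k W) {a : 𝔤}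
    (ha : a ∈ k) (ha' : ∀ x ∈ k, ⁅x, a⁆ = 0) (hne : ∃ w ∈ W, ⁅a, w⁆ ≠ 0) :
    ∃ μ : ℝ, μ < 0 ∧ ∀ w ∈ W, ⁅a, ⁅a, w⁆⁆ = μ • w := by
  obtain ⟨μ, hμ⟩ := hW.exists_lie_lie_eq_smul hcompact ha ha ha' ha'
  obtain ⟨w, hw, haw⟩ := hne
  have hw₀ : w ≠ 0 := by rintro rfl; simp at haw
  have h : killingForm ℝ 𝔤 ⁅a, w⁆ ⁅a, w⁆ = -(μ * killingForm ℝ 𝔤 w w) := by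
    rw [LieModule.traceForm_apply_lie_apply', hμ w hw, map_smul, smul_eq_mul]
  refine ⟨μ, ?_, hμ⟩
  nlinarith [hcompact _ haw, hcompact w hw₀]

theorem AdIrreducible.exists_lie_eq_smul_lie
    (hcompact : ∀ x : 𝔤, x ≠ 0 → killingForm ℝ 𝔤 x x < 0)
    {k : LieSubalgebra ℝ 𝔤} {W : Submodule ℝ 𝔤} (hW : AdIrreducible k W) {a b : 𝔤}
    (ha : a ∈ k) (hb : b ∈ k) (ha' : ∀ x ∈ k, ⁅x, a⁆ = 0) (hb' : ∀ x ∈ k, ⁅x, b⁆ = 0)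
    {μ : ℝ} (hμ : μ ≠ 0) (haa : ∀ w ∈ W, ⁅a, ⁅a, w⁆⁆ = μ • w) :
    ∃ c : ℝ, ∀ w ∈ W, ⁅b, w⁆ = c • ⁅a, w⁆ := by
  obtain ⟨c, hc⟩ := hW.exists_lie_lie_eq_smul hcompact hb ha hb' ha'
  refine ⟨μ⁻¹ * c, fun w hw => ?_⟩
  calc ⁅b, w⁆ = μ⁻¹ • ⁅b, ⁅a, ⁅a, w⁆⁆⁆ := by rw [haa w hw, lie_smul, inv_smul_smul₀ hμ]
    _ = (μ⁻¹ * c) • ⁅a, w⁆ := by rw [hc _ (hW.1 a ha w hw), smul_smul]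

end CompactType

section SquareScalar

variable {𝔤 : Type*} [LieRing 𝔤] [LieAlgebra ℝ 𝔤]

theorem Submodule.map_map_of_forall_apply_apply_eq_smul {V : Type*} [AddCommGroup V]
    [Module ℝ V] {W U : Submodule ℝ V} {D : V →ₗ[ℝ] V} {μ : ℝ} (hμ : μ ≠ 0)
    (hDD : ∀ w ∈ W, D (D w) = μ • w) (hU : U ≤ W) : (U.map D).map D = U := by
  apply le_antisymm
  · rintro _ ⟨_, ⟨u, hu, rfl⟩, rfl⟩
    rw [hDD u (hU hu)]
    exact U.smul_mem μ hu
  · intro u hu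
    have h : D (D (μ⁻¹ • u)) = u := by rw [map_smul, map_smul, hDD u (hU hu), inv_smul_smul₀ hμ]
    exact h ▸ Submodule.mem_map_of_mem (Submodule.mem_map_of_mem (U.smul_mem μ⁻¹ hu))

theorem AdIrreducible.map {k : LieSubalgebra ℝ 𝔤} {W n : Submodule ℝ 𝔤} {D : 𝔤 →ₗ[ℝ] 𝔤} {μ : ℝ}
    (hn : AdIrreducible k n) (hnW : n ≤ W) (hμ : μ ≠ 0) (hDW : ∀ w ∈ W, D w ∈ W)
    (hDD : ∀ w ∈ W, D (D w) = μ • w) (hDk : ∀ x ∈ k, ∀ w ∈ W, D ⁅x, w⁆ = ⁅x, D w⁆) :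
    AdIrreducible k (n.map D) := by
  obtain ⟨hninv, hn₀, hnmin⟩ := hn
  have hDn : n.map D ≤ W := Submodule.map_le_iff_le_comap.mpr fun w hw => hDW w (hnW hw)
  refine ⟨hninv.map fun x hx w hw => hDk x hx w (hnW hw), ?_, fun V hV hVinv => ?_⟩
  · intro h
    apply hn₀
    rw [← Submodule.map_map_of_forall_apply_apply_eq_smul hμ hDD hnW, h, Submodule.map_bot]
  · have hVW : V ≤ W := hV.trans hDn
    have hDV : V.map D ≤ n := by
      rw [← Submodule.map_map_of_forall_apply_apply_eq_smul hμ hDD hnW]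
      exact Submodule.map_mono hV
    rw [← Submodule.map_map_of_forall_apply_apply_eq_smul hμ hDD hVW]
    rcases hnmin _ hDV (hVinv.map fun x hx w hw => hDk x hx w (hVW hw)) with h | h
    · exact Or.inl (by rw [h, Submodule.map_bot])
    · exact Or.inr (by rw [h])

theorem adEquiv_map {k : LieSubalgebra ℝ 𝔤} {W n : Submodule ℝ 𝔤} {D : 𝔤 →ₗ[ℝ] 𝔤} {μ : ℝ}
    (hnW : n ≤ W) (hμ : μ ≠ 0) (hDD : ∀ w ∈ W, D (D w) = μ • w)
    (hDk : ∀ x ∈ k, ∀ w ∈ W, D ⁅x, w⁆ = ⁅x, D w⁆) : AdEquiv k n (n.map D) := by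
  refine ⟨D, rfl, fun u hu hDu => ?_, fun x hx u hu => hDk x hx u (hnW hu)⟩
  have h := hDD u (hnW hu)
  rw [hDu, map_zero, eq_comm, smul_eq_zero] at h
  exact h.resolve_left hμ

/-- For `n` minimal, `n ⊓ D n` and `n ⊔ D n` are stable under `k` and `D`. -/
theorem AdReducible.exists_adIrreducible_sup_map_eq [IsArtinian ℝ 𝔤] {k : LieSubalgebra ℝ 𝔤}
    {W : Submodule ℝ 𝔤} (hW : AdReducible k W) {D : 𝔤 →ₗ[ℝ] 𝔤} {μ : ℝ}
    (hμ : μ ≠ 0) (hDW : ∀ w ∈ W, D w ∈ W) (hDD : ∀ w ∈ W, D (D w) = μ • w)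
    (hDk : ∀ x ∈ k, ∀ w ∈ W, D ⁅x, w⁆ = ⁅x, D w⁆)
    (hirr : ∀ U ≤ W, AdInvariant k U → U.map D ≤ U → U = ⊥ ∨ U = W) :
    ∃ n ≤ W, AdIrreducible k n ∧ Disjoint n (n.map D) ∧ n ⊔ n.map D = W := by
  obtain ⟨-, U, hUW, hUinv, hU₀, hUW'⟩ := hW
  obtain ⟨n, hnU, hn⟩ := hUinv.exists_adIrreducible_le hU₀
  have hnW : n ≤ W := hnU.trans hUW
  have hDDn : (n.map D).map D = n := Submodule.map_map_of_forall_apply_apply_eq_smul hμ hDD hnW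
  have hDninv : AdInvariant k (n.map D) := hn.1.map fun x hx w hw => hDk x hx w (hnW hw)
  have hDnW : n.map D ≤ W := Submodule.map_le_iff_le_comap.mpr fun w hw => hDW w (hnW hw)
  refine ⟨n, hnW, hn, disjoint_iff.mpr ?_, ?_⟩
  · refine (hn.2.2 _ inf_le_left (hn.1.inf hDninv)).resolve_right fun h => ?_
    have hle : n.map D ≤ n := (Submodule.map_mono (inf_eq_left.mp h)).trans hDDn.le
    rcases hirr n hnW hn.1 hle with h₀ | hW
    · exact hn.2.1 h₀
    · exact hUW' (le_antisymm hUW (hW ▸ hnU))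
  · have hle : (n ⊔ n.map D).map D ≤ n ⊔ n.map D := by
      rw [Submodule.map_sup, hDDn, sup_comm]
    refine (hirr _ (sup_le hnW hDnW) (hn.1.sup hDninv) hle).resolve_left fun h => ?_
    exact hn.2.1 (le_bot_iff.mp (h ▸ le_sup_left))

end SquareScalar

theorem reducible_summand_splits_into_two_equivalent_irreducibles_general
    {𝔤 : Type*} [LieRing 𝔤] [LieAlgebra ℝ 𝔤] [FiniteDimensional ℝ 𝔤]
    -- `G` is a compact simple Lie group: `𝔤` is simple with negative definite Killing form
    (hcompact : ∀ x : 𝔤, x ≠ 0 → killingForm ℝ 𝔤 x x < 0)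
    (𝔨 𝔨₁ 𝔰 : LieSubalgebra ℝ 𝔤)
    -- `S` is a torus in `G` and `K = C(S)` is its centralizer
    (h𝔨cent : ∀ x : 𝔤, x ∈ 𝔨 ↔ ∀ s ∈ 𝔰, ⁅s, x⁆ = 0)
    -- `K = S × K₁`, `K₁` being the semisimple part of `K`
    (h𝔰𝔨 : 𝔰 ≤ 𝔨) (h𝔨₁𝔨 : 𝔨₁ ≤ 𝔨)
    (h𝔨sum : 𝔰.toSubmodule ⊔ 𝔨₁.toSubmodule = 𝔨.toSubmodule)
    -- the `B`-orthogonal reductive decomposition `𝔤 = 𝔨 ⊕ 𝔪`, where `B = -Killing form`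
    (𝔪 : Submodule ℝ 𝔤)
    (h𝔪compl : IsCompl 𝔨.toSubmodule 𝔪)
    -- the decomposition `𝔪 = 𝔪₁ ⊕ ⋯ ⊕ 𝔪ₛ`, `B`-orthogonal, into pairwise inequivalent
    -- irreducible `Ad(K)`-submodules
    (s : ℕ) (m : Fin s → Submodule ℝ 𝔤)
    (hmsub : ∀ i, m i ≤ 𝔪)
    (hmirr : ∀ i, AdIrreducible 𝔨 (m i))
    -- `𝔪ᵢ` is reducible as an `Ad(K₁)`-module
    (i : Fin s) (hred : AdReducible 𝔨₁ (m i)) :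
    ∃ n₁ n₂ : Submodule ℝ 𝔤,
      n₁ ≤ m i ∧ n₂ ≤ m i ∧
      AdIrreducible 𝔨₁ n₁ ∧ AdIrreducible 𝔨₁ n₂ ∧
      Disjoint n₁ n₂ ∧ n₁ ⊔ n₂ = m i ∧
      AdEquiv 𝔨₁ n₁ n₂ := by
  have hcentral : ∀ a ∈ 𝔰, ∀ x ∈ 𝔨, ⁅x, a⁆ = 0 := fun a ha x hx => by
    rw [← lie_skew, (h𝔨cent x).mp hx a ha, neg_zero]
  -- `𝔰` cannot act trivially on `m i`, which would then lie in `𝔨 ⊓ 𝔪 = ⊥`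
  obtain ⟨s₀, hs₀, hne⟩ : ∃ s₀ ∈ 𝔰, ∃ w ∈ m i, ⁅s₀, w⁆ ≠ 0 := by
    by_contra! h
    have hle : m i ≤ 𝔨.toSubmodule ⊓ 𝔪 :=
      le_inf (fun w hw => (h𝔨cent w).mpr fun a ha => h a ha w hw) (hmsub i)
    exact (hmirr i).2.1 (le_bot_iff.mp (hle.trans h𝔪compl.disjoint.le_bot))
  obtain ⟨μ, hμ, hDD⟩ :=
    (hmirr i).exists_neg_lie_lie_eq_smul hcompact (h𝔰𝔨 hs₀) (hcentral s₀ hs₀) hne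
  have hirr : ∀ U ≤ m i, AdInvariant 𝔨₁ U → U.map (LieAlgebra.ad ℝ 𝔤 s₀) ≤ U →
      U = ⊥ ∨ U = m i := by
    intro U hU hU₁ hDU
    refine (hmirr i).2.2 U hU (AdInvariant.of_le_sup h𝔨sum.ge (fun a ha u hu => ?_) hU₁)
    obtain ⟨c, hc⟩ := (hmirr i).exists_lie_eq_smul_lie hcompact (h𝔰𝔨 hs₀) (h𝔰𝔨 ha)
      (hcentral s₀ hs₀) (hcentral a ha) hμ.ne hDD
    rw [hc u (hU hu)]
    exact U.smul_mem c (hDU (Submodule.mem_map_of_mem hu))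
  have hDW : ∀ w ∈ m i, ⁅s₀, w⁆ ∈ m i := (hmirr i).1 s₀ (h𝔰𝔨 hs₀)
  have hDk₁ : ∀ x ∈ 𝔨₁, ∀ w ∈ m i, ⁅s₀, ⁅x, w⁆⁆ = ⁅x, ⁅s₀, w⁆⁆ := fun x hx w _ =>
    lie_lie_comm_of_lie_eq_zero (by rw [← lie_skew, hcentral s₀ hs₀ x (h𝔨₁𝔨 hx), neg_zero]) w
  obtain ⟨n, hn, hnirr, hdisj, hsup⟩ :=
    hred.exists_adIrreducible_sup_map_eq (D := LieAlgebra.ad ℝ 𝔤 s₀) hμ.ne hDW hDD hDk₁ hirr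
  exact ⟨n, _, hn, hsup ▸ le_sup_right, hnirr, hnirr.map hn hμ.ne hDW hDD hDk₁, hdisj, hsup,
    adEquiv_map hn hμ.ne hDD hDk₁⟩

/-- **Lemma 2** (Arvanitoyeorgos–Wang–Zhao).
Let `G/K` be a generalized flag manifold with isotropy decomposition
`𝔪 = 𝔪₁ ⊕ ⋯ ⊕ 𝔪ₛ` into pairwise inequivalent irreducible `Ad(K)`-submodules, and
`K = S × K₁`.  If some `𝔪ᵢ` is reducible as an `Ad(K₁)`-module, then
`𝔪ᵢ = 𝔫₁ⁱ ⊕ 𝔫₂ⁱ` for exactly two `Ad(K₁)`-invariant irreducible submodules `𝔫₁ⁱ, 𝔫₂ⁱ`,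
which are moreover equivalent as `Ad(K₁)`-modules. -/
theorem reducible_summand_splits_into_two_equivalent_irreducibles
    {𝔤 : Type*} [LieRing 𝔤] [LieAlgebra ℝ 𝔤] [FiniteDimensional ℝ 𝔤]
    -- `G` is a compact simple Lie group: `𝔤` is simple with negative definite Killing form
    [LieAlgebra.IsSimple ℝ 𝔤]
    (hcompact : ∀ x : 𝔤, x ≠ 0 → killingForm ℝ 𝔤 x x < 0)
    (𝔨 𝔨₁ 𝔰 : LieSubalgebra ℝ 𝔤)
    -- `S` is a torus in `G` and `K = C(S)` is its centralizer
    (h𝔰ab : ∀ x ∈ 𝔰, ∀ y ∈ 𝔰, ⁅x, y⁆ = (0 : 𝔤))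
    (h𝔨cent : ∀ x : 𝔤, x ∈ 𝔨 ↔ ∀ s ∈ 𝔰, ⁅s, x⁆ = 0)
    -- `K = S × K₁`, `K₁` being the semisimple part of `K`
    (h𝔰𝔨 : 𝔰 ≤ 𝔨) (h𝔨₁𝔨 : 𝔨₁ ≤ 𝔨)
    (h𝔨sum : 𝔰.toSubmodule ⊔ 𝔨₁.toSubmodule = 𝔨.toSubmodule)
    (h𝔨disj : Disjoint 𝔰.toSubmodule 𝔨₁.toSubmodule)
    (h𝔰𝔨₁ : ∀ s ∈ 𝔰, ∀ k ∈ 𝔨₁, ⁅s, k⁆ = (0 : 𝔤))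
    (hder : ∀ x ∈ 𝔨, ∀ y ∈ 𝔨, ⁅x, y⁆ ∈ 𝔨₁)
    -- the `B`-orthogonal reductive decomposition `𝔤 = 𝔨 ⊕ 𝔪`, where `B = -Killing form`
    (𝔪 : Submodule ℝ 𝔤)
    (h𝔪compl : IsCompl 𝔨.toSubmodule 𝔪)
    (h𝔪orth : ∀ x ∈ 𝔨, ∀ y ∈ 𝔪, killingForm ℝ 𝔤 x y = 0)
    (h𝔪inv : AdInvariant 𝔨 𝔪)
    -- the decomposition `𝔪 = 𝔪₁ ⊕ ⋯ ⊕ 𝔪ₛ`, `B`-orthogonal, into pairwise inequivalent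
    -- irreducible `Ad(K)`-submodules
    (s : ℕ) (m : Fin s → Submodule ℝ 𝔤)
    (hmsub : ∀ i, m i ≤ 𝔪)
    (hmsum : ⨆ i, m i = 𝔪)
    (hmorth : ∀ i j, i ≠ j → ∀ x ∈ m i, ∀ y ∈ m j, killingForm ℝ 𝔤 x y = 0)
    (hmirr : ∀ i, AdIrreducible 𝔨 (m i))
    (hmineq : ∀ i j, i ≠ j → ¬ AdEquiv 𝔨 (m i) (m j))
    -- `𝔪ᵢ` is reducible as an `Ad(K₁)`-module
    (i : Fin s) (hred : AdReducible 𝔨₁ (m i)) :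
    ∃ n₁ n₂ : Submodule ℝ 𝔤,
      n₁ ≤ m i ∧ n₂ ≤ m i ∧
      AdIrreducible 𝔨₁ n₁ ∧ AdIrreducible 𝔨₁ n₂ ∧
      Disjoint n₁ n₂ ∧ n₁ ⊔ n₂ = m i ∧
      AdEquiv 𝔨₁ n₁ n₂ :=
  reducible_summand_splits_into_two_equivalent_irreducibles_general hcompact 𝔨 𝔨₁ 𝔰 h𝔨cent h𝔰𝔨 h𝔨₁𝔨
    h𝔨sum 𝔪 h𝔪compl s m hmsub hmirr i hred
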